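/- arXiv:1508.07522 — 5 statements merged into one kernel-verified Lean document; each statement's English description precedes it below -/
import Mathlib

section
/- For all real m ≥ 2, 1.31 / (exp(1.31/(m+1)) - 1) ≥ m. -/
/-!
Put `x = c / (m + 1)`, so the claim is `m (eˣ - 1) ≤ c`, i.e. `(c - x) eˣ ≤ c + (c - 1) x`.
Bounding `eˣ` by its cubic Taylor polynomial with the Lagrange-type remainder `2x³/9` leaves
`(c/2 - 1) x² + (2c/9 - 1/2) x³ - 2x⁴/9 ≤ 0`, which holds for every `x ≥ 0` once `c ≤ 2`.
-/

namespace Real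

theorem exp_le_cubic {x : ℝ} (hx₀ : 0 ≤ x) (hx₁ : x ≤ 1) :
    exp x ≤ 1 + x + x ^ 2 / 2 + 2 / 9 * x ^ 3 := by
  have h := exp_bound' hx₀ hx₁ (n := 3) (by norm_num)
  norm_num [Finset.sum_range_succ, Nat.factorial] at h
  linarith

theorem sub_mul_exp_le {c x : ℝ} (hc : c ≤ 2) (hx₀ : 0 ≤ x) (hx₁ : x ≤ 1)
    (hxc : x ≤ c) :
    (c - x) * exp x ≤ c + (c - 1) * x :=
  calc (c - x) * exp x ≤ (c - x) * (1 + x + x ^ 2 / 2 + 2 / 9 * x ^ 3) :=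
        mul_le_mul_of_nonneg_left (exp_le_cubic hx₀ hx₁) (by linarith)
    _ = c + (c - 1) * x + (c / 2 - 1) * x ^ 2 + (2 * c / 9 - 1 / 2) * x ^ 3
          - 2 / 9 * x ^ 4 := by ring
    _ ≤ c + (c - 1) * x := by
        have h₂ : (c / 2 - 1) * x ^ 2 ≤ 0 :=
          mul_nonpos_of_nonpos_of_nonneg (by linarith) (by positivity)
        have h₃ : (2 * c / 9 - 1 / 2) * x ^ 3 ≤ 0 :=
          mul_nonpos_of_nonpos_of_nonneg (by linarith) (by positivity)
        nlinarith [pow_nonneg hx₀ 4]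

theorem le_div_exp_div_add_one_sub_one {c m : ℝ} (hc₀ : 0 < c) (hc₂ : c ≤ 2) (hm : 0 < m)
    (hcm : c ≤ m + 1) : m ≤ c / (exp (c / (m + 1)) - 1) := by
  set x := c / (m + 1)
  have hx₀ : 0 < x := by positivity
  have hx₁ : x ≤ 1 := (div_le_one (by linarith)).2 hcm
  have hxm : x * (m + 1) = c := div_mul_cancel₀ c (by linarith)
  have hxc : x ≤ c := by nlinarith
  have hscaled : x * (m * exp x) ≤ x * (m + c) := by
    have key := sub_mul_exp_le hc₂ hx₀.le hx₁ hxc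
    rw [← hxm] at key ⊢
    linarith
  have hexp : m * exp x ≤ m + c := le_of_mul_le_mul_left hscaled hx₀
  rw [le_div_iff₀ (by linarith [add_one_lt_exp hx₀.ne'])]
  linarith

end Real

theorem stmt_1 : ∀ m : ℝ, 2 ≤ m →
    1.31 / (Real.exp (1.31 / (m + 1)) - 1) ≥ m := fun m hm =>
  Real.le_div_exp_div_add_one_sub_one (by norm_num) (by norm_num) (by linarith) (by linarith)
end

section
/- For all real m ≥ 2, (m - 1.31) / (exp((2.1·m + 3.41)/(m+1)) - 1) < 0.14·m. -/
/-! For `m > -1` the exponent is at least `2.1`, and `exp 2.1 > 57 / 7 = 1 + 1 / 0.14`, so the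
denominator `D` satisfies `0.14 * D ≥ 1`. Hence for `m > 0`, `0.14 * m * D ≥ m > m - 1.31`. -/

open Real

lemma le_mul_add_div_add_one {a b m : ℝ} (hab : a ≤ b) (hm : 0 < m + 1) :
    a ≤ (a * m + b) / (m + 1) := by
  rw [le_div_iff₀ hm]
  linarith

lemma fifty_seven_div_seven_lt_exp : (57 / 7 : ℝ) < exp 2.1 := by
  refine lt_of_lt_of_le ?_ (sum_le_exp_of_nonneg (x := 2.1) (by norm_num) 8)
  norm_num [Finset.sum_range_succ, Nat.factorial]

lemma sub_div_lt_mul_of_inv_add_one_le {m d c E : ℝ} (hm : 0 < m) (hd : 0 < d) (hc : 0 < c)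
    (hE : c⁻¹ + 1 ≤ E) : (m - d) / (E - 1) < c * m := by
  have hcE : 1 ≤ c * (E - 1) :=
    calc 1 = c * c⁻¹ := (mul_inv_cancel₀ hc.ne').symm
      _ ≤ c * (E - 1) := mul_le_mul_of_nonneg_left (by linarith) hc.le
  have hpos : 0 < E - 1 := by linarith [inv_pos.2 hc]
  rw [div_lt_iff₀ hpos]
  calc m - d < m := by linarith
    _ ≤ c * (E - 1) * m := le_mul_of_one_le_left hm.le hcE
    _ = c * m * (E - 1) := by ring

theorem stmt_3 : ∀ m : ℝ, 2 ≤ m →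
    (m - 1.31) / (Real.exp ((2.1 * m + 3.41) / (m + 1)) - 1) < 0.14 * m := by
  intro m hm
  have hexponent : (2.1 : ℝ) ≤ (2.1 * m + 3.41) / (m + 1) :=
    le_mul_add_div_add_one (by norm_num) (by linarith)
  have hexp : (0.14 : ℝ)⁻¹ + 1 ≤ exp ((2.1 * m + 3.41) / (m + 1)) := by
    refine le_trans ?_ (exp_le_exp.2 hexponent)
    linarith [fifty_seven_div_seven_lt_exp]
  exact sub_div_lt_mul_of_inv_add_one_le (by linarith) (by norm_num) (by norm_num) hexp
end

section
/- For all real m ≥ 20, (m - 1.31) / (exp((2.1·m + 3.41)/(m+1)) - 1) > 0.13·m - 0.5. -/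
/-! The exponent is `2.1 + 1.31 / (m + 1)`. Bounding `exp 2.1 < 8.2101` numerically and
`exp x < 1 / (1 - x)` for `x = 1.31 / (m + 1)` gives
`exp ((2.1 m + 3.41) / (m + 1)) < 8.2101 (m + 1) / (m - 0.31)`, after which the claim is a
quadratic inequality in `m` with positive coefficients. -/

open Real

lemma exp_two_point_one_lt : exp 2.1 < 8.2101 := by
  have h01 : exp 0.1 < 1 / (1 - 0.1) :=
    exp_bound_div_one_sub_of_interval' (by norm_num) (by norm_num)
  calc exp 2.1 = exp 1 * exp 1 * exp 0.1 := by rw [← exp_add, ← exp_add]; norm_num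
    _ < 2.7182818286 * 2.7182818286 * (1 / (1 - 0.1)) := by gcongr <;> exact exp_one_lt_d9
    _ < 8.2101 := by norm_num

lemma exp_rate_exponent_lt {m : ℝ} (hm : 0.31 < m) :
    exp ((2.1 * m + 3.41) / (m + 1)) < 8.2101 * (m + 1) / (m - 0.31) := by
  have hm1 : 0 < m + 1 := by linarith
  have hsplit : (2.1 * m + 3.41) / (m + 1) = 2.1 + 1.31 / (m + 1) := by
    field_simp; ring
  have htail : exp (1.31 / (m + 1)) < (m + 1) / (m - 0.31) := by
    have h := exp_bound_div_one_sub_of_interval' (x := 1.31 / (m + 1)) (by positivity)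
      (by rw [div_lt_one hm1]; linarith)
    have hinv : 1 / (1 - 1.31 / (m + 1)) = (m + 1) / (m - 0.31) := by
      field_simp; ring
    rwa [hinv] at h
  calc exp ((2.1 * m + 3.41) / (m + 1)) = exp 2.1 * exp (1.31 / (m + 1)) := by
        rw [hsplit, exp_add]
    _ < 8.2101 * ((m + 1) / (m - 0.31)) := by
        gcongr
        exact exp_two_point_one_lt
    _ = 8.2101 * (m + 1) / (m - 0.31) := by ring

theorem stmt_4 : ∀ m : ℝ, 20 ≤ m →
    (m - 1.31) / (Real.exp ((2.1 * m + 3.41) / (m + 1)) - 1) > 0.13 * m - 0.5 := by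
  intro m hm
  have hE1 : 1 < exp ((2.1 * m + 3.41) / (m + 1)) :=
    one_lt_exp_iff.mpr (div_pos (by linarith) (by linarith))
  have hEB := exp_rate_exponent_lt (by linarith : (0.31 : ℝ) < m)
  have hpoly : (0.13 * m - 0.5) * (8.2101 * (m + 1) / (m - 0.31) - 1) ≤ m - 1.31 := by
    rw [div_sub_one (by linarith), mul_div_assoc', div_le_iff₀ (by linarith)]
    nlinarith
  rw [gt_iff_lt, lt_div_iff₀ (sub_pos.mpr hE1)]
  calc (0.13 * m - 0.5) * (exp ((2.1 * m + 3.41) / (m + 1)) - 1)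
      < (0.13 * m - 0.5) * (8.2101 * (m + 1) / (m - 0.31) - 1) := by
        gcongr
        linarith
    _ ≤ m - 1.31 := hpoly
end

section
/- Let r₂ = 1.31/(exp(1.31/(m+1)) - 1), r₃ = 1/(e - 1), and r₆ = (m - 1.31)/(exp((2.1m+3.41)/(m+1)) - 1). Then for all real m ≥ 2, r₂ + r₆ - m·r₃ > 0. -/
/-!
Writing `x = 1.31 / (m + 1)`, the first term is `(m + 1) · x / (eˣ - 1)`, and the Padé-type bound
`x / (eˣ - 1) ≥ 1 - x / 2` makes it at least `m + 1 - 1.31 / 2 > m`. The second term is positive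
because `m > 1.31`, and the last one is less than `m` because `e > 2`.
-/

open Real

theorem one_sub_half_le_div_exp_sub_one {x : ℝ} (hx₀ : 0 < x) (hx₁ : x ≤ 1) :
    1 - x / 2 ≤ x / (exp x - 1) := by
  have hexp : exp x ≤ 1 + x + x ^ 2 / 2 + 2 / 9 * x ^ 3 := by
    have := exp_bound' hx₀.le hx₁ (n := 3) (by norm_num)
    norm_num [Finset.sum_range_succ, Nat.factorial] at this
    linarith
  have hpos : 0 < exp x - 1 := by linarith [add_one_lt_exp hx₀.ne']
  rw [le_div_iff₀ hpos]
  -- `(x + x²/2 + 2x³/9)(1 - x/2) = x - x³/36 - x⁴/9`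
  nlinarith [pow_pos hx₀ 3, pow_pos hx₀ 4]

theorem sub_half_le_div_exp_div_sub_one {a c : ℝ} (ha : 0 < a) (hac : a ≤ c) :
    c - a / 2 ≤ a / (exp (a / c) - 1) := by
  have hc : 0 < c := ha.trans_le hac
  have key := one_sub_half_le_div_exp_sub_one (div_pos ha hc) ((div_le_one hc).2 hac)
  calc c - a / 2 = c * (1 - a / c / 2) := by field_simp
    _ ≤ c * (a / c / (exp (a / c) - 1)) := by gcongr
    _ = a / (exp (a / c) - 1) := by field_simp

theorem stmt_9 : ∀ m : ℝ, 2 ≤ m →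
    1.31 / (Real.exp (1.31 / (m + 1)) - 1)
      + (m - 1.31) / (Real.exp ((2.1 * m + 3.41) / (m + 1)) - 1)
      - m * (1 / (Real.exp 1 - 1)) > 0 := by
  intro m hm
  have hr₂ : m + 1 - 1.31 / 2 ≤ 1.31 / (exp (1.31 / (m + 1)) - 1) :=
    sub_half_le_div_exp_div_sub_one (by norm_num) (by linarith)
  have hr₆ : 0 < (m - 1.31) / (exp ((2.1 * m + 3.41) / (m + 1)) - 1) :=
    div_pos (by linarith) (sub_pos.2 (one_lt_exp_iff.2 (by positivity)))
  have hr₃ : m * (1 / (exp 1 - 1)) < m := by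
    have := exp_one_gt_two
    refine mul_lt_of_lt_one_right (by linarith) ?_
    rw [div_lt_one (by linarith)]
    linarith
  linarith
end

section
/- Define r₁ = -1.1/(exp(-1.1) - 1), r₂ = 1.31/(exp(1.31/(m+1)) - 1), r₃ = 1/(e-1), r₄ = 0.1/(e-1), r₅ = -0.21/(exp(-2.1)-1), r₆ = (m-1.31)/(exp((2.1m+3.41)/(m+1)) - 1), r₇ = r₁+r₃+r₄, r₈ = r₁+r₂+r₅, r₉ = r₂+r₆-m·r₃, and let x = (e, exp(-2.1), exp((2.1m+3.41)/(m+1))). Then for every real m ≥ 2, the following three equations hold: -r₁x₁x₂ - r₃x₁ - r₄x₁ + r₇ = 0; -r₁x₁x₂ - r₂x₂x₃ - r₅x₂ + r₈ = 0; -r₂x₂x₃ + m·r₃x₁ - r₆x₃ + r₉ = 0. -/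
/-!
Each rate constant has the form `r = c / (exp a - 1)`, where `exp a` is the value at `x^#` of the
monomial the reaction consumes (`x₁x₂ = exp (-1.1)`, `x₂x₃ = exp (1.31/(m+1))`, `x₁ = e`,
`x₂ = exp (-2.1)`, `x₃ = exp ((2.1m+3.41)/(m+1))`). Subtracting the balanced inflow
`r₇, r₈, r₉`, every term becomes `r (exp a - 1) = c`, and the three equations reduce to the
linear identities `1.1 - 1 - 0.1 = 0`, `1.1 - 1.31 + 0.21 = 0` and `-1.31 + m - (m - 1.31) = 0`.
-/

namespace Real

theorem exp_sub_one_ne_zero {a : ℝ} (ha : a ≠ 0) : exp a - 1 ≠ 0 :=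
  sub_ne_zero.mpr fun h => ha (exp_eq_one_iff a |>.mp h)

theorem div_exp_sub_one_mul_exp_sub_one (c : ℝ) {a : ℝ} (ha : a ≠ 0) :
    c / (exp a - 1) * (exp a - 1) = c :=
  div_mul_cancel₀ c (exp_sub_one_ne_zero ha)

end Real

theorem stmt_19 : ∀ m : ℝ, 2 ≤ m →
    let r₁ : ℝ := -1.1 / (Real.exp (-1.1) - 1)
    let r₂ : ℝ := 1.31 / (Real.exp (1.31 / (m + 1)) - 1)
    let r₃ : ℝ := 1 / (Real.exp 1 - 1)
    let r₄ : ℝ := 0.1 / (Real.exp 1 - 1)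
    let r₅ : ℝ := -0.21 / (Real.exp (-2.1) - 1)
    let r₆ : ℝ := (m - 1.31) / (Real.exp ((2.1 * m + 3.41) / (m + 1)) - 1)
    let r₇ : ℝ := r₁ + r₃ + r₄
    let r₈ : ℝ := r₁ + r₂ + r₅
    let r₉ : ℝ := r₂ + r₆ - m * r₃
    let x₁ : ℝ := Real.exp 1
    let x₂ : ℝ := Real.exp (-2.1)
    let x₃ : ℝ := Real.exp ((2.1 * m + 3.41) / (m + 1))
    (-r₁ * x₁ * x₂ - r₃ * x₁ - r₄ * x₁ + r₇ = 0) ∧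
    (-r₁ * x₁ * x₂ - r₂ * x₂ * x₃ - r₅ * x₂ + r₈ = 0) ∧
    (-r₂ * x₂ * x₃ + m * r₃ * x₁ - r₆ * x₃ + r₉ = 0) := by
  intro m hm r₁ r₂ r₃ r₄ r₅ r₆ r₇ r₈ r₉ x₁ x₂ x₃
  have hm₁ : m + 1 ≠ 0 := by positivity
  have hx₁₂ : x₁ * x₂ = Real.exp (-1.1) := by rw [← Real.exp_add]; norm_num
  have hx₂₃ : x₂ * x₃ = Real.exp (1.31 / (m + 1)) := by
    rw [← Real.exp_add]; congr 1; field_simp; ring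
  have hr₁ : r₁ * (Real.exp (-1.1) - 1) = -1.1 :=
    Real.div_exp_sub_one_mul_exp_sub_one _ (by norm_num)
  have hr₂ : r₂ * (Real.exp (1.31 / (m + 1)) - 1) = 1.31 :=
    Real.div_exp_sub_one_mul_exp_sub_one _ (by positivity)
  have hr₃ : r₃ * (x₁ - 1) = 1 := Real.div_exp_sub_one_mul_exp_sub_one _ one_ne_zero
  have hr₄ : r₄ * (x₁ - 1) = 0.1 := Real.div_exp_sub_one_mul_exp_sub_one _ one_ne_zero
  have hr₅ : r₅ * (x₂ - 1) = -0.21 := Real.div_exp_sub_one_mul_exp_sub_one _ (by norm_num)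
  have hr₆ : r₆ * (x₃ - 1) = m - 1.31 :=
    Real.div_exp_sub_one_mul_exp_sub_one _ (by positivity)
  refine ⟨?_, ?_, ?_⟩
  · linear_combination -r₁ * hx₁₂ - hr₁ - hr₃ - hr₄
  · linear_combination -r₁ * hx₁₂ - r₂ * hx₂₃ - hr₁ - hr₂ - hr₅
  · linear_combination -r₂ * hx₂₃ - hr₂ + m * hr₃ - hr₆
end
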